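/- arXiv:2410.20303 — 7 statements merged into one kernel-verified Lean document; each statement's English description precedes it below -/
import Mathlib

section
/- (Theorem 1, case 3) Under Assumption 1, for any signal μ_S ∈ [0,1], the triple (y_EE(1, 0, μ_S), 1, 0) is a stationary Nash equilibrium for signal μ_S if and only if μ_S ≥ μ_S^max and 1 − γ/(β_P(α + (1 − α)μ_S)) ≤ y*_INT. -/
/-- Effective infection rate β_eff(z_S, z_I, μ_S). -/
noncomputable def betaEff (a bP bU zS zI m : ℝ) : ℝ :=
  (bP + (bU - bP) * zI) * (a + (1 - a) * (zS * m + zI * (1 - m)))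

/-- Endemic infection level y_EE(z_S, z_I, μ_S). -/
noncomputable def yEE (a gam bP bU zS zI m : ℝ) : ℝ :=
  1 - gam / betaEff a bP bU zS zI m

/-- The function h(z_I, μ_S). -/
noncomputable def hFun (a gam bP bU L CP zI m : ℝ) : ℝ :=
  (1 - a) * L * (bP + (bU - bP) * zI) * yEE a gam bP bU 1 zI m - CP

/-- The function g(z_I, μ_S). -/
noncomputable def gFun (a gam bP bU L CP CU zI m : ℝ) : ℝ :=
  yEE a gam bP bU 1 zI m * (CU - CP)
    - (1 - m) * (1 - yEE a gam bP bU 1 zI m) * (-(hFun a gam bP bU L CP zI m))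

/-- Expected-utility difference ΔU[S̄]. -/
noncomputable def dUS (a bP bU L CP y zI : ℝ) : ℝ :=
  (1 - a) * L * (bP + (bU - bP) * zI) * y - CP

/-- Expected-utility difference ΔU[Ī]. -/
noncomputable def dUI (a bP bU L CP CU m y zI : ℝ) : ℝ :=
  ((1 - m) * (1 - y) / (y + (1 - m) * (1 - y))) *
    ((1 - a) * L * (bP + (bU - bP) * zI) * y - CU) + CU - CP

/-- Stationary Nash equilibrium for signal μ_S = m. -/
def IsSNE (a gam bP bU L CP CU m y zS zI : ℝ) : Prop :=
  y ∈ Set.Ioo (0:ℝ) 1 ∧ zS ∈ Set.Icc (0:ℝ) 1 ∧ zI ∈ Set.Icc (0:ℝ) 1 ∧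
  gam < betaEff a bP bU zS zI m ∧
  y = yEE a gam bP bU zS zI m ∧
  (0 < dUS a bP bU L CP y zI → zS = 0) ∧
  (dUS a bP bU L CP y zI < 0 → zS = 1) ∧
  (0 < dUI a bP bU L CP CU m y zI → zI = 0) ∧
  (dUI a bP bU L CP CU m y zI < 0 → zI = 1)

/-- Characterization of μ_S^max. -/
def IsMuMax (a gam bP bU L CP CU mmax : ℝ) : Prop :=
  (0 ≤ gFun a gam bP bU L CP CU 0 0 ∧ mmax = 0) ∨
  (gFun a gam bP bU L CP CU 0 0 < 0 ∧ mmax ∈ Set.Ioo (0:ℝ) 1 ∧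
    gFun a gam bP bU L CP CU 0 mmax = 0)

/-- The threshold μ_S^min. -/
noncomputable def muMin (a gam bU L CP CU : ℝ) : ℝ :=
  1 - (bU - gam) * (CU - CP) / (gam * (CP - (1 - a) * L * (bU - gam)))

section Aux
variable {a gam bP bU L CP CU : ℝ}

lemma betaEff_eq (a bP bU m : ℝ) : betaEff a bP bU 1 0 m = bP * (a + (1 - a) * m) := by
  unfold betaEff; ring

lemma yEE_eq (a gam bP bU m : ℝ) :
    yEE a gam bP bU 1 0 m = 1 - gam / (bP * (a + (1 - a) * m)) := by
  unfold yEE; rw [betaEff_eq]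

lemma hFun_eq (a gam bP bU L CP m : ℝ) :
    hFun a gam bP bU L CP 0 m = (1 - a) * L * bP * yEE a gam bP bU 1 0 m - CP := by
  unfold hFun; ring

lemma gFun_eq (a gam bP bU L CP CU m : ℝ) :
    gFun a gam bP bU L CP CU 0 m = yEE a gam bP bU 1 0 m * (CU - CP)
      + (1 - m) * (1 - yEE a gam bP bU 1 0 m) * hFun a gam bP bU L CP 0 m := by
  unfold gFun; ring

lemma beta_pos (ha : 0 < a) (ha1 : a < 1) (hbP : 0 < bP) (hgam : 0 < gam)
    (hA1 : gam < a * bP) (hm0 : 0 ≤ m) :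
    gam < bP * (a + (1 - a) * m) := by
  nlinarith [mul_nonneg (mul_nonneg hbP.le (by linarith : (0:ℝ) ≤ 1 - a)) hm0]

lemma y_pos (ha : 0 < a) (ha1 : a < 1) (hbP : 0 < bP) (hgam : 0 < gam)
    (hA1 : gam < a * bP) (hm0 : 0 ≤ m) :
    0 < yEE a gam bP bU 1 0 m ∧ yEE a gam bP bU 1 0 m < 1 := by
  rw [yEE_eq]
  have hb : 0 < bP * (a + (1 - a) * m) := by
    nlinarith [mul_nonneg (mul_nonneg hbP.le (by linarith : (0:ℝ) ≤ 1 - a)) hm0, mul_pos hbP ha]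
  have h1 : gam / (bP * (a + (1 - a) * m)) < 1 :=
    (div_lt_one hb).2 (beta_pos ha ha1 hbP hgam hA1 hm0)
  have h2 : 0 < gam / (bP * (a + (1 - a) * m)) := div_pos hgam hb
  constructor <;> linarith

lemma y_mono (ha : 0 < a) (ha1 : a < 1) (hbP : 0 < bP) (hgam : 0 < gam)
    {m1 m2 : ℝ} (hm1 : 0 ≤ m1) (h12 : m1 < m2) :
    yEE a gam bP bU 1 0 m1 < yEE a gam bP bU 1 0 m2 := by
  rw [yEE_eq, yEE_eq]
  have k1 : (0:ℝ) ≤ 1 - a := by linarith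
  have hb1 : 0 < bP * (a + (1 - a) * m1) := by
    nlinarith [mul_nonneg (mul_nonneg hbP.le k1) hm1, mul_pos hbP ha]
  have hb2 : 0 < bP * (a + (1 - a) * m2) := by
    nlinarith [mul_nonneg (mul_nonneg hbP.le k1) (by linarith : (0:ℝ) ≤ m2), mul_pos hbP ha]
  have : gam / (bP * (a + (1 - a) * m2)) < gam / (bP * (a + (1 - a) * m1)) := by
    apply div_lt_div_of_pos_left hgam hb1
    nlinarith [mul_pos (mul_pos hbP (by linarith : (0:ℝ) < 1 - a)) (by linarith : (0:ℝ) < m2 - m1)]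
  linarith

lemma g_pos_of_h_pos (ha : 0 < a) (ha1 : a < 1) (hbP : 0 < bP) (hgam : 0 < gam)
    (hA1 : gam < a * bP) (hCPU : CP < CU) (hm0 : 0 ≤ m) (hm1 : m ≤ 1)
    (hh : 0 < hFun a gam bP bU L CP 0 m) :
    0 < gFun a gam bP bU L CP CU 0 m := by
  rw [gFun_eq]
  obtain ⟨hy0, hy1⟩ : 0 < yEE a gam bP bU 1 0 m ∧ yEE a gam bP bU 1 0 m < 1 :=
    y_pos ha ha1 hbP hgam hA1 hm0
  nlinarith [mul_pos hy0 (by linarith : (0:ℝ) < CU - CP),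
    mul_nonneg (mul_nonneg (by linarith : (0:ℝ) ≤ 1 - m) (by linarith : (0:ℝ) ≤ 1 - yEE a gam bP bU 1 0 m)) hh.le]

lemma g_strict_mono (ha : 0 < a) (ha1 : a < 1) (hbP : 0 < bP) (hgam : 0 < gam)
    (hA1 : gam < a * bP) (hL : 0 < L) (hCPU : CP < CU)
    {m1 m2 : ℝ} (hm1 : 0 ≤ m1) (hm2 : m2 ≤ 1) (h12 : m1 < m2)
    (hh2 : hFun a gam bP bU L CP 0 m2 ≤ 0) :
    gFun a gam bP bU L CP CU 0 m1 < gFun a gam bP bU L CP CU 0 m2 := by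
  rw [gFun_eq, gFun_eq]
  set y1 := yEE a gam bP bU 1 0 m1 with hy1def
  set y2 := yEE a gam bP bU 1 0 m2 with hy2def
  obtain ⟨hy10, hy11⟩ : 0 < y1 ∧ y1 < 1 := y_pos ha ha1 hbP hgam hA1 hm1
  obtain ⟨hy20, hy21⟩ : 0 < y2 ∧ y2 < 1 := y_pos ha ha1 hbP hgam hA1 (by linarith)
  have hyy : y1 < y2 := y_mono ha ha1 hbP hgam hm1 h12
  rw [hFun_eq, hFun_eq] at *
  have hLa : 0 < (1 - a) * L * bP := mul_pos (mul_pos (by linarith) hL) hbP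
  have hh12 : (1 - a) * L * bP * y1 - CP ≤ (1 - a) * L * bP * y2 - CP := by
    nlinarith [mul_pos hLa (by linarith : (0:ℝ) < y2 - y1)]
  have hprod : (1 - m2) * (1 - y2) ≤ (1 - m1) * (1 - y1) := by
    nlinarith [mul_nonneg (by linarith : (0:ℝ) ≤ m2 - m1) (by linarith : (0:ℝ) ≤ 1 - y2),
      mul_nonneg (by linarith : (0:ℝ) ≤ 1 - m1) (by linarith : (0:ℝ) ≤ y2 - y1)]
  have A : (1 - m1) * (1 - y1) * ((1 - a) * L * bP * y2 - CP)
      ≤ (1 - m2) * (1 - y2) * ((1 - a) * L * bP * y2 - CP) :=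
    mul_le_mul_of_nonpos_right hprod hh2
  have B : (1 - m1) * (1 - y1) * ((1 - a) * L * bP * y1 - CP)
      ≤ (1 - m1) * (1 - y1) * ((1 - a) * L * bP * y2 - CP) := by
    apply mul_le_mul_of_nonneg_left hh12
    nlinarith [mul_nonneg (by linarith : (0:ℝ) ≤ 1 - m1) (by linarith : (0:ℝ) ≤ 1 - y1)]
  have C : y1 * (CU - CP) < y2 * (CU - CP) :=
    mul_lt_mul_of_pos_right hyy (by linarith)
  linarith

end Aux

theorem stmt4
    (a gam bP bU L CP CU : ℝ)
    (ha : a ∈ Set.Ioo (0:ℝ) 1) (hgam : gam ∈ Set.Ioo (0:ℝ) 1)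
    (hbP : 0 < bP) (hbPU : bP < bU) (hbU1 : bU < 1)
    (hL : 0 < L) (hCP : 0 < CP) (hCPU : CP < CU)
    (hA1 : gam < a * bP)
    (mmax : ℝ) (hmmax : IsMuMax a gam bP bU L CP CU mmax)
    (m : ℝ) (hm : m ∈ Set.Icc (0:ℝ) 1) :
    IsSNE a gam bP bU L CP CU m (yEE a gam bP bU 1 0 m) 1 0 ↔
      (mmax ≤ m ∧
        1 - gam / (bP * (a + (1 - a) * m)) ≤ CP / (L * (1 - a) * bP)) := by
  obtain ⟨ha0, ha1⟩ := ha
  obtain ⟨hg0, hg1⟩ := hgam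
  obtain ⟨hm0, hm1⟩ := hm
  set Y := yEE a gam bP bU 1 0 m with hY
  obtain ⟨hY0, hY1⟩ : 0 < Y ∧ Y < 1 := y_pos ha0 ha1 hbP hg0 hA1 hm0
  have hdUS : dUS a bP bU L CP Y 0 = hFun a gam bP bU L CP 0 m := by
    rw [hFun_eq, ← hY]; unfold dUS; ring
  have hD : 0 < Y + (1 - m) * (1 - Y) := by
    nlinarith [mul_nonneg (by linarith : (0:ℝ) ≤ 1 - m) (by linarith : (0:ℝ) ≤ 1 - Y)]
  have hdUI : dUI a bP bU L CP CU m Y 0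
      = gFun a gam bP bU L CP CU 0 m / (Y + (1 - m) * (1 - Y)) := by
    rw [gFun_eq, hFun_eq, ← hY]; unfold dUI
    field_simp
    ring
  have hK : 0 < L * (1 - a) * bP := mul_pos (mul_pos hL (by linarith)) hbP
  have hcond : (1 - gam / (bP * (a + (1 - a) * m)) ≤ CP / (L * (1 - a) * bP))
      ↔ hFun a gam bP bU L CP 0 m ≤ 0 := by
    rw [hFun_eq, ← yEE_eq a gam bP bU m, ← hY, le_div_iff₀ hK]
    constructor <;> intro h <;> nlinarith
  constructor
  · rintro ⟨-, -, -, -, -, hS0, -, -, hI1⟩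
    have hh : hFun a gam bP bU L CP 0 m ≤ 0 := by
      by_contra hc
      push_neg at hc
      rw [← hdUS] at hc
      exact absurd (hS0 hc) one_ne_zero
    have hg : 0 ≤ gFun a gam bP bU L CP CU 0 m := by
      by_contra hc
      push_neg at hc
      have : dUI a bP bU L CP CU m Y 0 < 0 := by
        rw [hdUI]; exact div_neg_of_neg_of_pos hc hD
      exact absurd (hI1 this) zero_ne_one
    refine ⟨?_, hcond.2 hh⟩
    rcases hmmax with ⟨-, rfl⟩ | ⟨-, ⟨hmm0, hmm1⟩, hgz⟩
    · exact hm0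
    · by_contra hlt
      push_neg at hlt
      have hhmm : hFun a gam bP bU L CP 0 mmax ≤ 0 := by
        by_contra hc
        push_neg at hc
        have := g_pos_of_h_pos ha0 ha1 hbP hg0 hA1 hCPU hmm0.le hmm1.le hc
        linarith
      have := g_strict_mono ha0 ha1 hbP hg0 hA1 hL hCPU hm0 hmm1.le hlt hhmm
      linarith
  · rintro ⟨hmm, hc2⟩
    have hh : hFun a gam bP bU L CP 0 m ≤ 0 := hcond.1 hc2
    have hg : 0 ≤ gFun a gam bP bU L CP CU 0 m := by
      rcases hmmax with ⟨hg0', rfl⟩ | ⟨-, ⟨hmm0, -⟩, hgz⟩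
      · rcases eq_or_lt_of_le hm0 with heq | hlt
        · rwa [← heq]
        · have := g_strict_mono ha0 ha1 hbP hg0 hA1 hL hCPU le_rfl hm1 hlt hh
          linarith
      · rcases eq_or_lt_of_le hmm with heq | hlt
        · rw [← heq]; exact hgz.ge
        · have := g_strict_mono ha0 ha1 hbP hg0 hA1 hL hCPU hmm0.le hm1 hlt hh
          linarith
    refine ⟨⟨hY0, hY1⟩, ⟨zero_le_one, le_refl 1⟩, ⟨le_refl 0, zero_le_one⟩, ?_, rfl,
      ?_, fun _ => rfl, fun _ => rfl, ?_⟩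
    · rw [betaEff_eq]; exact beta_pos ha0 ha1 hbP hg0 hA1 hm0
    · intro hp; exfalso; rw [hdUS] at hp; linarith
    · intro hn; exfalso
      rw [hdUI] at hn
      have : 0 ≤ gFun a gam bP bU L CP CU 0 m / (Y + (1 - m) * (1 - Y)) :=
        div_nonneg hg hD.le
      linarith
end

section
/- (Remark 1, second claim) If C_P > (1 − α)·L·(β_U − γ) (Assumption 2), then for every μ_S ∈ [0,1] one has y*_INT ≥ 1 − γ/(β_P(α + (1 − α)μ_S)); in particular the necessary condition z_S^†(μ_S) ∈ (0,1) for the interior-protection stationary Nash equilibrium of Theorem 1 case 2 fails for all μ_S. -/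
/-! The threshold `1 - γ/(β_P(α + (1 - α)μ_S))` is largest at `μ_S = 1`, where it equals
`1 - γ/β_P`; and `y*_INT` exceeds `1 - γ/β_P` exactly when `C_P > (1 - α)L(β_P - γ)`, which
Assumption 2 gives since `β_P < β_U`. -/

lemma add_one_sub_mul_mem_Ioc {a m : ℝ} (ha : a ∈ Set.Ioc (0:ℝ) 1) (hm : m ∈ Set.Icc (0:ℝ) 1) :
    a + (1 - a) * m ∈ Set.Ioc (0:ℝ) 1 := by
  obtain ⟨ha0, ha1⟩ := ha
  obtain ⟨hm0, hm1⟩ := hm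
  constructor <;> nlinarith

lemma one_sub_div_mul_le_one_sub_div {g b d : ℝ} (hg : 0 ≤ g) (hb : 0 < b)
    (hd : d ∈ Set.Ioc (0:ℝ) 1) : 1 - g / (b * d) ≤ 1 - g / b :=
  sub_le_sub_left
    (div_le_div_of_nonneg_left hg (mul_pos hb hd.1) (mul_le_of_le_one_right hb.le hd.2)) 1

lemma one_sub_div_lt_div_mul {g b k C : ℝ} (hb : 0 < b) (hk : 0 < k) (h : k * (b - g) < C) :
    1 - g / b < C / (k * b) := by
  rw [lt_div_iff₀ (mul_pos hk hb)]
  calc (1 - g / b) * (k * b) = k * (b - g) := by field_simp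
    _ < C := h

theorem stmt8_general
    (a gam bP bU L CP : ℝ)
    (ha : a ∈ Set.Ioo (0:ℝ) 1) (hgam : gam ∈ Set.Ioo (0:ℝ) 1)
    (hbP : 0 < bP) (hbPU : bP < bU)
    (hL : 0 < L)
    (hA2 : (1 - a) * L * (bU - gam) < CP) :
    ∀ m ∈ Set.Icc (0:ℝ) 1,
      1 - gam / (bP * (a + (1 - a) * m)) ≤ CP / (L * (1 - a) * bP) ∧
      ¬(1 - gam / (a * bP) < CP / (L * (1 - a) * bP) ∧
          CP / (L * (1 - a) * bP) < 1 - gam / (bP * (a + (1 - a) * m))) := by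
  intro m hm
  have hLa : 0 < L * (1 - a) := mul_pos hL (sub_pos.mpr ha.2)
  have hcost : L * (1 - a) * (bP - gam) < CP :=
    calc L * (1 - a) * (bP - gam) < L * (1 - a) * (bU - gam) := by gcongr
      _ = (1 - a) * L * (bU - gam) := by ring
      _ < CP := hA2
  have hle : 1 - gam / (bP * (a + (1 - a) * m)) ≤ CP / (L * (1 - a) * bP) :=
    (one_sub_div_mul_le_one_sub_div hgam.1.le hbP
      (add_one_sub_mul_mem_Ioc ⟨ha.1, ha.2.le⟩ hm)).trans
        (one_sub_div_lt_div_mul hbP hLa hcost).le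
  exact ⟨hle, fun h => h.2.not_ge hle⟩

theorem stmt8
    (a gam bP bU L CP CU : ℝ)
    (ha : a ∈ Set.Ioo (0:ℝ) 1) (hgam : gam ∈ Set.Ioo (0:ℝ) 1)
    (hbP : 0 < bP) (hbPU : bP < bU) (hbU1 : bU < 1)
    (hL : 0 < L) (hCP : 0 < CP) (hCPU : CP < CU)
    (hA1 : gam < a * bP)
    (hA2 : (1 - a) * L * (bU - gam) < CP) :
    ∀ m ∈ Set.Icc (0:ℝ) 1,
      1 - gam / (bP * (a + (1 - a) * m)) ≤ CP / (L * (1 - a) * bP) ∧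
      ¬(1 - gam / (a * bP) < CP / (L * (1 - a) * bP) ∧
          CP / (L * (1 - a) * bP) < 1 - gam / (bP * (a + (1 - a) * m))) :=
  stmt8_general a gam bP bU L CP ha hgam hbP hbPU hL hA2
end

section
/- Under Assumption 1, if g(0, 0) < 0, then there exists a unique μ* ∈ (0,1) such that g(0, μ*) = 0; in particular μ_S^max is well defined and lies in (0,1) whenever g(0,0) < 0. -/
/-!
Along `z_I = 0` the endemic level is `y = 1 - γ / (β_P t)` with `t = α + (1 - α) μ > 0`, so clearing
the denominator `β_P t²` turns `g(0, μ)` into a quadratic in `μ`. This quadratic is `β_P α² g(0, 0) < 0`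
at `μ = 0` and `(C_U - C_P)(β_P - γ) > 0` at `μ = 1`, hence has a root in `(0, 1)`; by Vieta, a second
root there would force the leading coefficient to be negative (product of roots `C / A > 0`) and then
also the value at `1`, `A (1 - μ₁)(1 - μ₂)`, to be negative.
-/

open Set

theorem eq_of_quadratic_eq_zero_of_mem_Ioo {A B C x y : ℝ} (hC : C < 0) (hABC : 0 < A + B + C)
    (hx : x ∈ Ioo (0 : ℝ) 1) (hy : y ∈ Ioo (0 : ℝ) 1)
    (hqx : A * x ^ 2 + B * x + C = 0) (hqy : A * y ^ 2 + B * y + C = 0) : x = y := by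
  by_contra hxy
  have hsum : A * (x + y) + B = 0 := by
    have : (x - y) * (A * (x + y) + B) = 0 := by linear_combination hqx - hqy
    exact (mul_eq_zero.mp this).resolve_left (sub_ne_zero.mpr hxy)
  have hprod : C = A * (x * y) := by linear_combination hqx - x * hsum
  have hone : A + B + C = A * ((1 - x) * (1 - y)) := by linear_combination hsum + hprod
  have hxy0 : 0 < x * y := mul_pos hx.1 hy.1
  have hxy1 : 0 < (1 - x) * (1 - y) := mul_pos (by linarith [hx.2]) (by linarith [hy.2])
  have hA : A < 0 := by
    by_contra! hA
    nlinarith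
  nlinarith

theorem existsUnique_mem_Ioo_of_quadratic {q : ℝ → ℝ}
    (hq : ∃ A B C : ℝ, ∀ x, q x = A * x ^ 2 + B * x + C) (h0 : q 0 < 0) (h1 : 0 < q 1) :
    ∃! x, x ∈ Ioo (0 : ℝ) 1 ∧ q x = 0 := by
  obtain ⟨A, B, C, hq⟩ := hq
  have hcont : Continuous q := by
    rw [funext hq]
    fun_prop
  obtain ⟨x, hx, hqx⟩ := intermediate_value_Ioo zero_le_one hcont.continuousOn ⟨h0, h1⟩
  refine ⟨x, ⟨hx, hqx⟩, fun y ⟨hy, hqy⟩ => ?_⟩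
  simp only [hq, zero_pow two_ne_zero, mul_zero, zero_add, one_pow, mul_one] at h0 h1 hqx hqy
  exact eq_of_quadratic_eq_zero_of_mem_Ioo h0 h1 hy hx hqy hqx

noncomputable def gNum (a gam bP L CP CU m : ℝ) : ℝ :=
  let t := a + (1 - a) * m
  t * (bP * t - gam) * (CU - CP) + (1 - m) * gam * ((1 - a) * L * (bP * t - gam) - CP * t)

theorem gFun_zero_mul_eq_gNum {a gam bP bU L CP CU m : ℝ} (hbP : bP ≠ 0)
    (ht : a + (1 - a) * m ≠ 0) :
    gFun a gam bP bU L CP CU 0 m * (bP * (a + (1 - a) * m) ^ 2) = gNum a gam bP L CP CU m := by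
  have hrate : betaEff a bP bU 1 0 m = bP * (a + (1 - a) * m) := by
    simp only [betaEff]
    ring
  simp only [gFun, hFun, yEE, hrate, gNum]
  field_simp
  ring

theorem gNum_isQuadratic (a gam bP L CP CU : ℝ) :
    ∃ A B C : ℝ, ∀ m, gNum a gam bP L CP CU m = A * m ^ 2 + B * m + C := by
  set c := 1 - a
  set P := c * L * (bP * a - gam) - CP * a
  set Q := c * (c * L * bP - CP)
  refine ⟨(CU - CP) * bP * c ^ 2 - gam * Q, (CU - CP) * (2 * a * bP * c - gam * c) + gam * (Q - P),
    (CU - CP) * a * (bP * a - gam) + gam * P, fun m => ?_⟩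
  simp only [gNum, P, Q, c]
  ring

theorem gNum_one (a gam bP L CP CU : ℝ) : gNum a gam bP L CP CU 1 = (bP - gam) * (CU - CP) := by
  simp only [gNum]
  ring

theorem stmt10_general
    (a gam bP bU L CP CU : ℝ)
    (ha : a ∈ Set.Ioo (0:ℝ) 1)
    (hbP : 0 < bP)
    (hCPU : CP < CU)
    (hA1 : gam < a * bP)
    (hg00 : gFun a gam bP bU L CP CU 0 0 < 0) :
    ∃! m : ℝ, m ∈ Set.Ioo (0:ℝ) 1 ∧ gFun a gam bP bU L CP CU 0 m = 0 := by
  obtain ⟨ha0, ha1⟩ := ha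
  have ht : ∀ m, 0 ≤ m → 0 < a + (1 - a) * m := fun m hm => by nlinarith
  have hden : ∀ m, 0 ≤ m → 0 < bP * (a + (1 - a) * m) ^ 2 := fun m hm => by
    have := ht m hm
    positivity
  have hcleared : ∀ m, 0 ≤ m →
      gFun a gam bP bU L CP CU 0 m * (bP * (a + (1 - a) * m) ^ 2) = gNum a gam bP L CP CU m :=
    fun m hm => gFun_zero_mul_eq_gNum hbP.ne' (ht m hm).ne'
  have hroots : ∀ m, (m ∈ Ioo (0 : ℝ) 1 ∧ gFun a gam bP bU L CP CU 0 m = 0) ↔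
      (m ∈ Ioo (0 : ℝ) 1 ∧ gNum a gam bP L CP CU m = 0) := fun m =>
    and_congr_right fun hm => by
      rw [← hcleared m hm.1.le, mul_eq_zero, or_iff_left (hden m hm.1.le).ne']
  rw [existsUnique_congr hroots]
  refine existsUnique_mem_Ioo_of_quadratic (gNum_isQuadratic a gam bP L CP CU) ?_ ?_
  · rw [← hcleared 0 le_rfl]
    exact mul_neg_of_neg_of_pos hg00 (hden 0 le_rfl)
  · rw [gNum_one]
    exact mul_pos (by nlinarith) (by linarith)

theorem stmt10
    (a gam bP bU L CP CU : ℝ)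
    (ha : a ∈ Set.Ioo (0:ℝ) 1) (hgam : gam ∈ Set.Ioo (0:ℝ) 1)
    (hbP : 0 < bP) (hbPU : bP < bU) (hbU1 : bU < 1)
    (hL : 0 < L) (hCP : 0 < CP) (hCPU : CP < CU)
    (hA1 : gam < a * bP)
    (hg00 : gFun a gam bP bU L CP CU 0 0 < 0) :
    ∃! m : ℝ, m ∈ Set.Ioo (0:ℝ) 1 ∧ gFun a gam bP bU L CP CU 0 m = 0 :=
  stmt10_general a gam bP bU L CP CU ha hbP hCPU hA1 hg00
end

section
/- Under Assumption 1, if μ ∈ [0,1) satisfies g(0, μ) = 0, then h(0, μ) < 0. -/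
theorem stmt11
    (a gam bP bU L CP CU : ℝ)
    (ha : a ∈ Set.Ioo (0:ℝ) 1) (hgam : gam ∈ Set.Ioo (0:ℝ) 1)
    (hbP : 0 < bP) (hbPU : bP < bU) (hbU1 : bU < 1)
    (hL : 0 < L) (hCP : 0 < CP) (hCPU : CP < CU)
    (hA1 : gam < a * bP)
    (m : ℝ) (hm : m ∈ Set.Ico (0:ℝ) 1)
    (hg : gFun a gam bP bU L CP CU 0 m = 0) :
    hFun a gam bP bU L CP 0 m < 0 := by
  obtain ⟨ha0, ha1⟩ := ha
  obtain ⟨hg0, hg1⟩ := hgam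
  obtain ⟨hm0, hm1⟩ := hm
  have hB : betaEff a bP bU 1 0 m = bP * (a + (1 - a) * m) := by
    unfold betaEff; ring
  have hBgt : gam < bP * (a + (1 - a) * m) := by nlinarith [mul_nonneg (mul_nonneg hbP.le (by linarith : (0:ℝ) ≤ 1 - a)) hm0]
  have hBpos : 0 < bP * (a + (1 - a) * m) := lt_trans hg0 hBgt
  set y := yEE a gam bP bU 1 0 m with hy
  have hyval : y = 1 - gam / (bP * (a + (1 - a) * m)) := by
    rw [hy]; unfold yEE; rw [hB]
  have hy0 : 0 < y := by
    rw [hyval]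
    have : gam / (bP * (a + (1 - a) * m)) < 1 := (div_lt_one hBpos).mpr hBgt
    linarith
  have hy1 : y < 1 := by
    rw [hyval]
    have : 0 < gam / (bP * (a + (1 - a) * m)) := div_pos hg0 hBpos
    linarith
  have hgeq : y * (CU - CP) = (1 - m) * (1 - y) * (-(hFun a gam bP bU L CP 0 m)) := by
    have := hg
    unfold gFun at this
    linarith
  by_contra hcon
  push_neg at hcon
  have h1 : 0 ≤ (1 - m) * (1 - y) * hFun a gam bP bU L CP 0 m :=
    mul_nonneg (mul_nonneg (by linarith) (by linarith)) hcon
  have h2 : 0 < y * (CU - CP) := mul_pos hy0 (by linarith)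
  nlinarith
end

section
/- Under Assumption 1, suppose μ* ∈ (0,1) satisfies g(0, μ*) = 0. Then for every ε > 0 there exists δ > 0 such that for every μ ∈ (μ* − δ, μ*) ∩ [0,1), every z ∈ [0,1] with g(z, μ) = 0 satisfies 0 < z < ε. In particular, the interior equilibrium strategy z^†(μ) converges to 0 as μ approaches μ* from below, so the endemic infection level y_EE(1, z^†(μ), μ) converges to y_EE(1, 0, μ*). -/
/-!
Write `y(μ) = y_EE(1, 0, μ)`. As `μ` grows, `y` and `h(0, μ)` increase while `(1 - μ)(1 - y)`
decreases, so `g(0, ·)` is strictly increasing as long as `h(0, ·) ≤ 0`; and `g(0, μ*) = 0` forces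
`h(0, μ*) < 0`. Hence `g(0, μ) < 0` for `μ < μ*`, and no root of `g(·, μ)` lies at `z = 0`.

With `β_eff(1, z, μ) = B·A`, clearing the denominators of `g` gives
`β_eff·g = (B - γ/A)((C_U - C_P)·A + w) - c`, where `w, c ≥ 0` do not depend on `z` and `B`, `A`
increase with `z`. So `β_eff·g` grows at rate at least `α(β_U - β_P)(C_U - C_P)` in `z`, and a root
`z` satisfies `α(β_U - β_P)(C_U - C_P)·z ≤ -β_eff(1, 0, μ)·g(0, μ)`, which tends to `0` as
`μ → μ*` by continuity.
-/
section

variable {a gam bP bU L CP CU : ℝ}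

lemma yEE_one_zero (m : ℝ) :
    yEE a gam bP bU 1 0 m = 1 - gam / (bP * (a + (1 - a) * m)) := by
  simp [yEE, betaEff]

lemma yEE_one_zero_mem_Ioo (ha0 : 0 < a) (ha1 : a ≤ 1) (hgam : 0 < gam) (hbP : 0 < bP)
    (hA1 : gam < a * bP) {m : ℝ} (hm0 : 0 ≤ m) : yEE a gam bP bU 1 0 m ∈ Set.Ioo 0 1 := by
  have hA : a ≤ a + (1 - a) * m := le_add_of_nonneg_right (mul_nonneg (by linarith) hm0)
  have hβ : 0 < bP * (a + (1 - a) * m) := by positivity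
  rw [yEE_one_zero, Set.mem_Ioo, sub_pos, div_lt_one hβ, sub_lt_self_iff]
  exact ⟨by nlinarith, by positivity⟩

lemma yEE_one_zero_lt_of_lt (ha0 : 0 < a) (ha1 : a < 1) (hgam : 0 < gam) (hbP : 0 < bP)
    {m₁ m₂ : ℝ} (hm₁ : 0 ≤ m₁) (hm : m₁ < m₂) :
    yEE a gam bP bU 1 0 m₁ < yEE a gam bP bU 1 0 m₂ := by
  rw [yEE_one_zero, yEE_one_zero, sub_lt_sub_iff_left]
  have hA : 0 < a + (1 - a) * m₁ := by nlinarith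
  gcongr

lemma hFun_zero_neg_of_gFun_eq_zero (ha0 : 0 < a) (ha1 : a ≤ 1) (hgam : 0 < gam)
    (hbP : 0 < bP) (hA1 : gam < a * bP) (hCPU : CP < CU) {m : ℝ} (hm0 : 0 ≤ m) (hm1 : m ≤ 1)
    (hg : gFun a gam bP bU L CP CU 0 m = 0) : hFun a gam bP bU L CP 0 m < 0 := by
  obtain ⟨hy0, hy1⟩ := yEE_one_zero_mem_Ioo (bU := bU) ha0 ha1 hgam hbP hA1 hm0
  unfold gFun at hg
  by_contra! hh
  have hu : 0 ≤ (1 - m) * (1 - yEE a gam bP bU 1 0 m) := by nlinarith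
  nlinarith [mul_nonneg hu hh]

lemma gFun_zero_lt_of_lt (ha0 : 0 < a) (ha1 : a < 1) (hgam : 0 < gam) (hbP : 0 < bP)
    (hA1 : gam < a * bP) (hL : 0 ≤ L) (hCPU : CP < CU) {m₁ m₂ : ℝ} (hm₁ : 0 ≤ m₁)
    (hm : m₁ < m₂) (hm₂ : m₂ ≤ 1) (hh : hFun a gam bP bU L CP 0 m₂ ≤ 0) :
    gFun a gam bP bU L CP CU 0 m₁ < gFun a gam bP bU L CP CU 0 m₂ := by
  have hy := yEE_one_zero_lt_of_lt (bU := bU) ha0 ha1 hgam hbP hm₁ hm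
  have hy₂ := (yEE_one_zero_mem_Ioo (bU := bU) ha0 ha1.le hgam hbP hA1 (hm₁.trans hm.le)).2
  have hh_mono : hFun a gam bP bU L CP 0 m₁ ≤ hFun a gam bP bU L CP 0 m₂ := by
    unfold hFun
    have : 0 ≤ (1 - a) * L * (bP + (bU - bP) * 0) := by
      simpa using mul_nonneg (mul_nonneg (sub_nonneg.2 ha1.le) hL) hbP.le
    gcongr
  have hu : (1 - m₂) * (1 - yEE a gam bP bU 1 0 m₂) ≤
      (1 - m₁) * (1 - yEE a gam bP bU 1 0 m₁) := by
    apply mul_le_mul <;> linarith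
  have hprod := mul_le_mul hu (neg_le_neg hh_mono) (neg_nonneg.2 hh) (by nlinarith)
  unfold gFun
  nlinarith

lemma betaEff_mul_gFun_eq {z m : ℝ} (hB : bP + (bU - bP) * z ≠ 0)
    (hA : a + (1 - a) * (m + z * (1 - m)) ≠ 0) :
    betaEff a bP bU 1 z m * gFun a gam bP bU L CP CU z m =
      (bP + (bU - bP) * z - gam / (a + (1 - a) * (m + z * (1 - m)))) *
        ((CU - CP) * (a + (1 - a) * (m + z * (1 - m))) + (1 - m) * gam * L * (1 - a))
        - (1 - m) * gam * CP := by
  simp only [gFun, hFun, yEE, betaEff, one_mul]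
  field_simp
  ring

lemma sub_div_mul_add_sub_ge {γ d w B₀ B A₀ A : ℝ} (hγ : 0 ≤ γ) (hd : 0 ≤ d)
    (hw : 0 ≤ w) (hA₀ : 0 < A₀) (hA : A₀ ≤ A) (hB₀ : γ ≤ B₀ * A₀) (hB : B₀ ≤ B) :
    (B - B₀) * (d * A) ≤ (B - γ / A) * (d * A + w) - (B₀ - γ / A₀) * (d * A₀ + w) := by
  have hγA : γ / A ≤ γ / A₀ := div_le_div_of_nonneg_left hγ hA₀ hA
  have hB₀' : 0 ≤ B₀ - γ / A₀ := sub_nonneg.2 ((div_le_iff₀ hA₀).2 hB₀)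
  have hprod := mul_le_mul (sub_le_sub_left hγA B₀)
    (add_le_add_right (mul_le_mul_of_nonneg_left hA hd) w) (by positivity) (by linarith)
  nlinarith

lemma betaEff_mul_gFun_sub_ge (ha0 : 0 < a) (ha1 : a ≤ 1) (hgam : 0 ≤ gam) (hbP : 0 < bP)
    (hA1 : gam < a * bP) (hbPU : bP ≤ bU) (hL : 0 ≤ L) (hCPU : CP ≤ CU) {z m : ℝ}
    (hz : 0 ≤ z) (hm0 : 0 ≤ m) (hm1 : m ≤ 1) :
    a * (bU - bP) * (CU - CP) * z ≤
      betaEff a bP bU 1 z m * gFun a gam bP bU L CP CU z m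
        - betaEff a bP bU 1 0 m * gFun a gam bP bU L CP CU 0 m := by
  have hA₀ : a ≤ a + (1 - a) * m := le_add_of_nonneg_right (mul_nonneg (by linarith) hm0)
  have hA : a + (1 - a) * m ≤ a + (1 - a) * (m + z * (1 - m)) := by
    nlinarith [mul_nonneg (sub_nonneg.2 ha1) (mul_nonneg hz (sub_nonneg.2 hm1))]
  have hB : bP ≤ bP + (bU - bP) * z := le_add_of_nonneg_right (by nlinarith)
  rw [betaEff_mul_gFun_eq (by positivity) (by positivity),
    betaEff_mul_gFun_eq (by positivity) (by positivity)]
  simp only [mul_zero, zero_mul, add_zero]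
  have hinc := sub_div_mul_add_sub_ge hgam (sub_nonneg.2 hCPU)
    (by positivity : 0 ≤ (1 - m) * gam * L * (1 - a)) (by positivity) hA (by nlinarith) hB
  have hcoef : 0 ≤ (bU - bP) * z * (CU - CP) :=
    mul_nonneg (mul_nonneg (sub_nonneg.2 hbPU) hz) (sub_nonneg.2 hCPU)
  nlinarith [mul_le_mul_of_nonneg_left (hA₀.trans hA) hcoef]

lemma continuousAt_betaEff_mul_gFun_zero {m₀ : ℝ} (hβ : betaEff a bP bU 1 0 m₀ ≠ 0) :
    ContinuousAt (fun m ↦ betaEff a bP bU 1 0 m * gFun a gam bP bU L CP CU 0 m) m₀ := by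
  have hβc : Continuous (betaEff a bP bU 1 0) := by unfold betaEff; fun_prop
  have hy : ContinuousAt (yEE a gam bP bU 1 0) m₀ :=
    continuousAt_const.sub (continuousAt_const.div hβc.continuousAt hβ)
  unfold gFun hFun
  fun_prop

end

theorem stmt14_general
    (a gam bP bU L CP CU : ℝ)
    (ha : a ∈ Set.Ioo (0:ℝ) 1) (hgam : gam ∈ Set.Ioo (0:ℝ) 1)
    (hbP : 0 < bP) (hbPU : bP < bU)
    (hL : 0 < L) (hCPU : CP < CU)
    (hA1 : gam < a * bP)
    (mst : ℝ) (hmst : mst ∈ Set.Ioo (0:ℝ) 1)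
    (hg : gFun a gam bP bU L CP CU 0 mst = 0) :
    ∀ ε > (0:ℝ), ∃ δ > (0:ℝ), ∀ m : ℝ,
      mst - δ < m → m < mst → 0 ≤ m →
      ∀ z ∈ Set.Icc (0:ℝ) 1, gFun a gam bP bU L CP CU z m = 0 →
        0 < z ∧ z < ε := by
  obtain ⟨ha0, ha1⟩ := ha
  obtain ⟨hgam0, -⟩ := hgam
  obtain ⟨hmst0, hmst1⟩ := hmst
  have hβ : betaEff a bP bU 1 0 mst ≠ 0 := by
    have : 0 < a + (1 - a) * mst := by nlinarith
    simp only [betaEff]; positivity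
  have hlim := (continuousAt_betaEff_mul_gFun_zero
    (gam := gam) (L := L) (CP := CP) (CU := CU) hβ).tendsto
  rw [hg, mul_zero] at hlim
  have hK : 0 < a * (bU - bP) * (CU - CP) := by
    have := sub_pos.2 hbPU; have := sub_pos.2 hCPU; positivity
  intro ε hε
  obtain ⟨δ, hδ, hclose⟩ := Metric.tendsto_nhds_nhds.1 hlim _ (mul_pos hK hε)
  refine ⟨δ, hδ, fun m hm_lo hm_hi hm0 z ⟨hz0, _⟩ hgz ↦ ?_⟩
  have hneg : gFun a gam bP bU L CP CU 0 m < 0 :=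
    (gFun_zero_lt_of_lt ha0 ha1 hgam0 hbP hA1 hL.le hCPU hm0 hm_hi hmst1.le
      (hFun_zero_neg_of_gFun_eq_zero ha0 ha1.le hgam0 hbP hA1 hCPU hmst0.le hmst1.le
        hg).le).trans_eq hg
  refine ⟨hz0.lt_of_ne (by rintro rfl; exact hneg.ne hgz), ?_⟩
  have hkey := betaEff_mul_gFun_sub_ge ha0 ha1.le hgam0.le hbP hA1 hbPU.le hL.le hCPU.le
    hz0 hm0 (hm_hi.trans hmst1).le
  rw [hgz, mul_zero, zero_sub] at hkey
  have hdist : dist m mst < δ := by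
    rw [Real.dist_eq, abs_sub_lt_iff]; constructor <;> linarith
  have hsmall := hclose hdist
  rw [dist_zero_right, Real.norm_eq_abs] at hsmall
  have hneg_abs := neg_le_abs (betaEff a bP bU 1 0 m * gFun a gam bP bU L CP CU 0 m)
  exact lt_of_mul_lt_mul_left (by linarith) hK.le

theorem stmt14
    (a gam bP bU L CP CU : ℝ)
    (ha : a ∈ Set.Ioo (0:ℝ) 1) (hgam : gam ∈ Set.Ioo (0:ℝ) 1)
    (hbP : 0 < bP) (hbPU : bP < bU) (hbU1 : bU < 1)
    (hL : 0 < L) (hCP : 0 < CP) (hCPU : CP < CU)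
    (hA1 : gam < a * bP)
    (mst : ℝ) (hmst : mst ∈ Set.Ioo (0:ℝ) 1)
    (hg : gFun a gam bP bU L CP CU 0 mst = 0) :
    ∀ ε > (0:ℝ), ∃ δ > (0:ℝ), ∀ m : ℝ,
      mst - δ < m → m < mst → 0 ≤ m →
      ∀ z ∈ Set.Icc (0:ℝ) 1, gFun a gam bP bU L CP CU z m = 0 →
        0 < z ∧ z < ε :=
  stmt14_general a gam bP bU L CP CU ha hgam hbP hbPU hL hCPU hA1 mst hmst hg
end

section
/- Under Assumption 1, let μ ∈ (0,1) and z ∈ (0,1) satisfy g(z, μ) = 0. Set w = β_eff(1, z, μ), y = 1 − γ/w, and L_eq = (1 − α)·L·(β_U − β_P)·(1 − μ)·(1 − y). Then z = C_P·w/(L·(w − γ)·(1 − α)·(β_U − β_P)) − (C_U − C_P)/L_eq − β_P/(β_U − β_P). -/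
/-! With y := y_EE(1, z, μ) held fixed, g(z, μ) = 0 is linear in the transmission factor
β_P + (β_U − β_P) z, so it can be solved for z. Assumption 1 gives β_eff ≥ α β_P > γ, hence
0 < y < 1 and every denominator in the solved form is nonzero; 1 − y = γ / w turns the solved
form into the stated one, where w = β_eff(1, z, μ). -/

theorem le_betaEff_of_mem_Icc {a bP bU zS zI m : ℝ} (ha : a ∈ Set.Icc (0:ℝ) 1)
    (hbP : 0 ≤ bP) (hbPU : bP ≤ bU) (hzS : 0 ≤ zS) (hzI : 0 ≤ zI)
    (hm : m ∈ Set.Icc (0:ℝ) 1) :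
    a * bP ≤ betaEff a bP bU zS zI m := by
  obtain ⟨ha0, ha1⟩ := ha
  obtain ⟨hm0, hm1⟩ := hm
  have hrate : bP ≤ bP + (bU - bP) * zI :=
    le_add_of_nonneg_right (mul_nonneg (sub_nonneg.2 hbPU) hzI)
  have hcontact : a ≤ a + (1 - a) * (zS * m + zI * (1 - m)) :=
    le_add_of_nonneg_right (mul_nonneg (sub_nonneg.2 ha1)
      (add_nonneg (mul_nonneg hzS hm0) (mul_nonneg hzI (sub_nonneg.2 hm1))))
  rw [mul_comm]
  exact mul_le_mul hrate hcontact ha0 (hbP.trans hrate)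

theorem yEE_mem_Ioo {a gam bP bU zS zI m : ℝ} (hgam : 0 < gam)
    (hβ : gam < betaEff a bP bU zS zI m) :
    yEE a gam bP bU zS zI m ∈ Set.Ioo (0:ℝ) 1 := by
  have hβ0 : 0 < betaEff a bP bU zS zI m := hgam.trans hβ
  unfold yEE
  constructor
  · rw [sub_pos, div_lt_one hβ0]
    exact hβ
  · exact sub_lt_self 1 (div_pos hgam hβ0)

theorem eq_of_indifference {a L CP CU bP bU m y z : ℝ} (ha : a ≠ 1) (hL : L ≠ 0)
    (hbPU : bP ≠ bU) (hm : m ≠ 1) (hy0 : y ≠ 0) (hy1 : y ≠ 1)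
    (h : y * (CU - CP) - (1 - m) * (1 - y) * -((1 - a) * L * (bP + (bU - bP) * z) * y - CP) = 0) :
    z = CP / ((1 - a) * L * (bU - bP) * y)
      - (CU - CP) / ((1 - a) * L * (bU - bP) * (1 - m) * (1 - y)) - bP / (bU - bP) := by
  have ha' : 1 - a ≠ 0 := sub_ne_zero.2 (Ne.symm ha)
  have hb' : bU - bP ≠ 0 := sub_ne_zero.2 (Ne.symm hbPU)
  have hm' : 1 - m ≠ 0 := sub_ne_zero.2 (Ne.symm hm)
  have hy' : 1 - y ≠ 0 := sub_ne_zero.2 (Ne.symm hy1)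
  field_simp
  linear_combination h

theorem stmt15_general
    (a gam bP bU L CP CU : ℝ)
    (ha : a ∈ Set.Ioo (0:ℝ) 1) (hgam : gam ∈ Set.Ioo (0:ℝ) 1)
    (hbP : 0 < bP) (hbPU : bP < bU)
    (hL : 0 < L)
    (hA1 : gam < a * bP)
    (m z : ℝ) (hm : m ∈ Set.Ioo (0:ℝ) 1) (hz : z ∈ Set.Ioo (0:ℝ) 1)
    (hg : gFun a gam bP bU L CP CU z m = 0) :
    z = CP * betaEff a bP bU 1 z m /
          (L * (betaEff a bP bU 1 z m - gam) * (1 - a) * (bU - bP))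
        - (CU - CP) /
          ((1 - a) * L * (bU - bP) * (1 - m) *
            (1 - (1 - gam / betaEff a bP bU 1 z m)))
        - bP / (bU - bP) := by
  have hw : gam < betaEff a bP bU 1 z m :=
    hA1.trans_le (le_betaEff_of_mem_Icc (Set.Ioo_subset_Icc_self ha) hbP.le hbPU.le zero_le_one
      hz.1.le (Set.Ioo_subset_Icc_self hm))
  obtain ⟨hy0, hy1⟩ := yEE_mem_Ioo hgam.1 hw
  have key := eq_of_indifference ha.2.ne hL.ne' hbPU.ne hm.2.ne hy0.ne' hy1.ne hg
  refine key.trans ?_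
  have hw0 : betaEff a bP bU 1 z m ≠ 0 := (hgam.1.trans hw).ne'
  have hwγ : betaEff a bP bU 1 z m - gam ≠ 0 := (sub_pos.2 hw).ne'
  congr 2
  unfold yEE
  field_simp

theorem stmt15
    (a gam bP bU L CP CU : ℝ)
    (ha : a ∈ Set.Ioo (0:ℝ) 1) (hgam : gam ∈ Set.Ioo (0:ℝ) 1)
    (hbP : 0 < bP) (hbPU : bP < bU) (hbU1 : bU < 1)
    (hL : 0 < L) (hCP : 0 < CP) (hCPU : CP < CU)
    (hA1 : gam < a * bP)
    (m z : ℝ) (hm : m ∈ Set.Ioo (0:ℝ) 1) (hz : z ∈ Set.Ioo (0:ℝ) 1)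
    (hg : gFun a gam bP bU L CP CU z m = 0) :
    z = CP * betaEff a bP bU 1 z m /
          (L * (betaEff a bP bU 1 z m - gam) * (1 - a) * (bU - bP))
        - (CU - CP) /
          ((1 - a) * L * (bU - bP) * (1 - m) *
            (1 - (1 - gam / betaEff a bP bU 1 z m)))
        - bP / (bU - bP) :=
  stmt15_general a gam bP bU L CP CU ha hgam hbP hbPU hL hA1 m z hm hz hg
end

section
/- Under Assumptions 1 and 2, let μ ∈ (0,1) and z ∈ (0,1) satisfy g(z, μ) = 0, and set y = y_EE(1, z, μ). Then 1 − z < (C_U − C_P)/((1 − α)·L·(β_U − β_P)·(1 − μ)·(1 − y)). -/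
set_option maxHeartbeats 1000000 in
theorem stmt16
    (a gam bP bU L CP CU : ℝ)
    (ha : a ∈ Set.Ioo (0:ℝ) 1) (hgam : gam ∈ Set.Ioo (0:ℝ) 1)
    (hbP : 0 < bP) (hbPU : bP < bU) (hbU1 : bU < 1)
    (hL : 0 < L) (hCP : 0 < CP) (hCPU : CP < CU)
    (hA1 : gam < a * bP)
    (hA2 : (1 - a) * L * (bU - gam) < CP)
    (m z : ℝ) (hm : m ∈ Set.Ioo (0:ℝ) 1) (hz : z ∈ Set.Ioo (0:ℝ) 1)
    (hg : gFun a gam bP bU L CP CU z m = 0) :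
    1 - z < (CU - CP) /
      ((1 - a) * L * (bU - bP) * (1 - m) * (1 - yEE a gam bP bU 1 z m)) := by
  obtain ⟨ha0, ha1⟩ := ha
  obtain ⟨hg0, hg1⟩ := hgam
  obtain ⟨hm0, hm1⟩ := hm
  obtain ⟨hz0, hz1⟩ := hz
  simp only [gFun, hFun] at hg
  set B := bP + (bU - bP) * z with hB
  have hBge : bP ≤ B := by nlinarith
  have hBle : B ≤ bU := by nlinarith
  set s := a + (1 - a) * (1 * m + z * (1 - m)) with hs
  have hsge : a ≤ s := by
    rw [hs]
    nlinarith [mul_pos hz0 (sub_pos.mpr hm1)]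
  have hsle : s ≤ 1 := by
    rw [hs]
    nlinarith [mul_nonneg (mul_nonneg (by linarith : (0:ℝ) ≤ 1 - a)
      (by linarith : (0:ℝ) ≤ 1 - m)) (by linarith : (0:ℝ) ≤ 1 - z)]
  have hbeta : betaEff a bP bU 1 z m = B * s := by simp [betaEff, hB, hs]
  clear_value B s
  have hβgam : gam < B * s := by
    nlinarith [mul_le_mul hsge hBge hbP.le (le_trans ha0.le hsge)]
  have hβpos : (0:ℝ) < B * s := lt_trans hg0 hβgam
  set y := yEE a gam bP bU 1 z m with hy
  have hyval : y = 1 - gam / (B * s) := by rw [hy, yEE, hbeta]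
  clear_value y
  have hy0 : 0 < y := by
    have : gam / (B * s) < 1 := (div_lt_one hβpos).mpr hβgam
    rw [hyval]; linarith
  have hy1 : y < 1 := by
    have : 0 < gam / (B * s) := div_pos hg0 hβpos
    rw [hyval]; linarith
  have hbU0 : (0:ℝ) < bU := lt_trans hbP hbPU
  have hβle : B * s ≤ bU := by
    nlinarith [mul_le_mul hBle hsle (by linarith : (0:ℝ) ≤ s) hbU0.le]
  have hq : gam / bU ≤ gam / (B * s) := by
    apply div_le_div_of_nonneg_left hg0.le hβpos hβle
  have hyle : y ≤ 1 - gam / bU := by rw [hyval]; linarith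
  have hbUy : bU * (1 - gam / bU) = bU - gam := by field_simp
  have h2 : bU * y ≤ bU - gam := by
    have := mul_le_mul_of_nonneg_left hyle hbU0.le
    linarith [hbUy]
  have hLa : (0:ℝ) ≤ (1 - a) * L := mul_nonneg (by linarith) hL.le
  have hykey : (1 - a) * L * bU * y < CP := by
    have h3 := mul_le_mul_of_nonneg_left h2 hLa
    nlinarith
  have hgeq : y * (CU - CP) = (1 - m) * (1 - y) * (CP - (1 - a) * L * B * y) := by
    linear_combination hg
  have hident : y * (CU - CP)
      - y * ((1 - z) * ((1 - a) * L * (bU - bP) * (1 - m) * (1 - y)))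
      = (1 - m) * (1 - y) * (CP - (1 - a) * L * bU * y) := by
    linear_combination hgeq - (1 - m) * (1 - y) * (1 - a) * L * y * hB
  have hpos : 0 < (1 - m) * (1 - y) * (CP - (1 - a) * L * bU * y) := by
    apply mul_pos (mul_pos (by linarith) (by linarith)) (by linarith)
  have hkey : y * ((1 - z) * ((1 - a) * L * (bU - bP) * (1 - m) * (1 - y)))
      < y * (CU - CP) := by linarith
  have hfin : (1 - z) * ((1 - a) * L * (bU - bP) * (1 - m) * (1 - y)) < CU - CP :=
    (mul_lt_mul_iff_right₀ hy0).mp hkey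
  have hD : 0 < (1 - a) * L * (bU - bP) * (1 - m) * (1 - y) := by
    apply mul_pos (mul_pos (mul_pos (mul_pos (by linarith) hL) (by linarith)) (by linarith)) (by linarith)
  rw [lt_div_iff₀ hD]
  exact hfin
end
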